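/- Let Γ ⊂ ℝ^d be the graph of a 1-Lipschitz function A : ℝ^n → ℝ^{d−n} over L_0 = ℝ^n × {0}, σ = (Π_Γ)_* H^n|_{L_0}, and B a ball centered on Γ. There exists ε_0 = ε_0(n) > 0 such that if L is an n-plane with ∠(L, L_0) > 1 − ε_0, then α_{σ,2,L}(B) ≳ 1, with an implicit constant depending only on n and d. -/

import Mathlib

open MeasureTheory Metric Set
open scoped ENNReal NNReal

noncomputable section

/-- A coupling (transport plan) between two measures on `ℝ^d`. -/
def IsCoupling {d : ℕ} (π : Measure (EuclideanSpace ℝ (Fin d) × EuclideanSpace ℝ (Fin d)))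
    (μ ν : Measure (EuclideanSpace ℝ (Fin d))) : Prop :=
  π.map Prod.fst = μ ∧ π.map Prod.snd = ν

/-- The `p`-Wasserstein distance between two measures (of equal total mass). -/
def Wp {d : ℕ} (p : ℝ) (μ ν : Measure (EuclideanSpace ℝ (Fin d))) : ℝ≥0∞ :=
  ⨅ (π : Measure (EuclideanSpace ℝ (Fin d) × EuclideanSpace ℝ (Fin d))) (_ : IsCoupling π μ ν),
    (∫⁻ z, edist z.1 z.2 ^ p ∂π) ^ (1 / p)

/-- Radial profile of the cutoff function: `1` on `[0,2]`, `(3-t)^2` on `(2,3)`, `0` beyond. -/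
def phi0 (t : ℝ) : ℝ := if t ≤ 2 then 1 else if t < 3 then (3 - t) ^ 2 else 0

/-- The cutoff function `φ_B` for the ball `B(x,r)`. -/
def cutoff {d : ℕ} (x : EuclideanSpace ℝ (Fin d)) (r : ℝ) (y : EuclideanSpace ℝ (Fin d)) : ℝ :=
  phi0 (dist y x / r)

/-- The measure `φ_B μ`. -/
def cutoffMeas {d : ℕ} (μ : Measure (EuclideanSpace ℝ (Fin d))) (x : EuclideanSpace ℝ (Fin d))
    (r : ℝ) : Measure (EuclideanSpace ℝ (Fin d)) :=
  μ.withDensity fun y => ENNReal.ofReal (cutoff x r y)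

/-- `L` is an `n`-plane (affine subspace of dimension `n`). -/
def IsPlane {d : ℕ} (n : ℕ) (L : AffineSubspace ℝ (EuclideanSpace ℝ (Fin d))) : Prop :=
  Module.finrank ℝ L.direction = n

/-- The coefficient `α_{μ,p,L}(B(x,r))`, defined through the `p`-Wasserstein distance between
`φ_B μ` and the normalized measure `a_{B,L} φ_B H^n|_L`. -/
def alphaL {d : ℕ} (n : ℕ) (p : ℝ) (μ : Measure (EuclideanSpace ℝ (Fin d)))
    (x : EuclideanSpace ℝ (Fin d)) (r : ℝ)
    (L : AffineSubspace ℝ (EuclideanSpace ℝ (Fin d))) : ℝ≥0∞ :=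
  let σL : Measure (EuclideanSpace ℝ (Fin d)) :=
    (μH[(n : ℝ)]).restrict (L : Set (EuclideanSpace ℝ (Fin d)))
  let aBL : ℝ≥0∞ := cutoffMeas μ x r univ / cutoffMeas σL x r univ
  Wp p (cutoffMeas μ x r) (aBL • cutoffMeas σL x r) /
    (ENNReal.ofReal r * μ (ball x r) ^ (1 / p))

/-- The graph map of `A : ℝ^n → ℝ^m`, sending `y` to the point `(y, A y) ∈ ℝ^{n+m}`. -/
def graphMap (n m : ℕ) (A : EuclideanSpace ℝ (Fin n) → EuclideanSpace ℝ (Fin m))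
    (y : EuclideanSpace ℝ (Fin n)) : EuclideanSpace ℝ (Fin (n + m)) :=
  (WithLp.equiv 2 (Fin (n + m) → ℝ)).symm
    (fun i => Fin.addCases (fun i₁ => y i₁) (fun i₂ => A y i₂) i)

/-- The measure `σ = (Π_Γ)_* H^n|_{L₀}` associated to the graph of `A`. -/
def graphMeasure (n m : ℕ) (A : EuclideanSpace ℝ (Fin n) → EuclideanSpace ℝ (Fin m)) :
    Measure (EuclideanSpace ℝ (Fin (n + m))) :=
  Measure.map (graphMap n m A) (μH[(n : ℝ)] : Measure (EuclideanSpace ℝ (Fin n)))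

/-- The horizontal `n`-plane `L₀ = ℝ^n × {0} ⊂ ℝ^{n+m}`, as an affine subspace. -/
def L0 (n m : ℕ) : AffineSubspace ℝ (EuclideanSpace ℝ (Fin (n + m))) :=
  (Submodule.span ℝ
    (range fun i₁ : Fin n =>
      EuclideanSpace.single (Fin.castAdd m i₁) (1 : ℝ))).toAffineSubspace

/-- The "angle" `∠(L₁, L₂)` between two planes: the Hausdorff distance between the unit balls of
the directions of `L₁` and `L₂`. -/
def planeAngle {d : ℕ} (L₁ L₂ : AffineSubspace ℝ (EuclideanSpace ℝ (Fin d))) : ℝ :=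
  Metric.hausdorffDist
    ((L₁.direction : Set (EuclideanSpace ℝ (Fin d))) ∩ closedBall 0 1)
    ((L₂.direction : Set (EuclideanSpace ℝ (Fin d))) ∩ closedBall 0 1)

open scoped RealInnerProductSpace

/-- horizontal part -/
def hpart {n m : ℕ} (z : EuclideanSpace ℝ (Fin (n + m))) : EuclideanSpace ℝ (Fin n) :=
  WithLp.toLp 2 (fun i => z (Fin.castAdd m i))

/-- vertical part -/
def vpart {n m : ℕ} (z : EuclideanSpace ℝ (Fin (n + m))) : EuclideanSpace ℝ (Fin m) :=
  WithLp.toLp 2 (fun j => z (Fin.natAdd n j))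

lemma inner_split {n m : ℕ} (z w : EuclideanSpace ℝ (Fin (n + m))) :
    ⟪z, w⟫ = ⟪hpart z, hpart w⟫ + ⟪vpart z, vpart w⟫ := by
  simp only [PiLp.inner_apply, RCLike.inner_apply, conj_trivial]
  rw [Fin.sum_univ_add]
  rfl

lemma norm_split {n m : ℕ} (z : EuclideanSpace ℝ (Fin (n + m))) :
    ‖z‖ ^ 2 = ‖hpart z‖ ^ 2 + ‖vpart z‖ ^ 2 := by
  have h := inner_split z z
  rw [real_inner_self_eq_norm_sq, real_inner_self_eq_norm_sq, real_inner_self_eq_norm_sq] at h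
  exact h

lemma hpart_graphMap {n m : ℕ} (A : EuclideanSpace ℝ (Fin n) → EuclideanSpace ℝ (Fin m))
    (y : EuclideanSpace ℝ (Fin n)) : hpart (graphMap n m A y) = y := by
  apply PiLp.ext; intro i
  simp [hpart, graphMap]

lemma vpart_graphMap {n m : ℕ} (A : EuclideanSpace ℝ (Fin n) → EuclideanSpace ℝ (Fin m))
    (y : EuclideanSpace ℝ (Fin n)) : vpart (graphMap n m A y) = A y := by
  apply PiLp.ext; intro j
  simp [vpart, graphMap]

lemma graph_dist_sq {n m : ℕ} (A : EuclideanSpace ℝ (Fin n) → EuclideanSpace ℝ (Fin m))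
    (a b : EuclideanSpace ℝ (Fin n)) :
    dist (graphMap n m A a) (graphMap n m A b) ^ 2 = dist a b ^ 2 + dist (A a) (A b) ^ 2 := by
  have h1 : dist (graphMap n m A a) (graphMap n m A b) ^2
      = ∑ i, dist (graphMap n m A a i) (graphMap n m A b i) ^ 2 := by
    rw [EuclideanSpace.dist_eq]
    exact Real.sq_sqrt (Finset.sum_nonneg fun i _ => sq_nonneg _)
  have h2 : dist a b ^ 2 = ∑ i, dist (a i) (b i) ^ 2 := by
    rw [EuclideanSpace.dist_eq]
    exact Real.sq_sqrt (Finset.sum_nonneg fun i _ => sq_nonneg _)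
  have h3 : dist (A a) (A b) ^ 2 = ∑ i, dist (A a i) (A b i) ^ 2 := by
    rw [EuclideanSpace.dist_eq]
    exact Real.sq_sqrt (Finset.sum_nonneg fun i _ => sq_nonneg _)
  rw [h1, h2, h3, Fin.sum_univ_add]
  congr 1 <;> · apply Finset.sum_congr rfl; intro i _; simp [graphMap]
lemma L0_direction (n m : ℕ) : (L0 n m).direction =
    Submodule.span ℝ (range fun i₁ : Fin n => EuclideanSpace.single (Fin.castAdd m i₁) (1 : ℝ)) :=
  Submodule.toAffineSubspace_direction _

lemma vpart_eq_zero_of_mem {n m : ℕ} {w : EuclideanSpace ℝ (Fin (n + m))}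
    (hw : w ∈ (L0 n m).direction) : vpart w = 0 := by
  rw [L0_direction] at hw
  -- consider the kernel submodule
  set K : Submodule ℝ (EuclideanSpace ℝ (Fin (n + m))) :=
    ⨅ j : Fin m, LinearMap.ker
      ((LinearMap.proj (Fin.natAdd n j)).comp (WithLp.linearEquiv 2 ℝ _).toLinearMap) with hK
  have hle : Submodule.span ℝ
      (range fun i₁ : Fin n => EuclideanSpace.single (Fin.castAdd m i₁) (1 : ℝ)) ≤ K := by
    rw [Submodule.span_le]
    rintro _ ⟨i, rfl⟩
    rw [SetLike.mem_coe, hK, Submodule.mem_iInf]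
    intro j
    rw [LinearMap.mem_ker]
    have : (Fin.natAdd n j : Fin (n+m)) ≠ Fin.castAdd m i := by
      intro h
      have h2 := congrArg Fin.val h
      simp only [Fin.natAdd, Fin.castAdd, Fin.castLE] at h2
      omega
    simp [EuclideanSpace.single_apply, this]
  have hwK := hle hw
  rw [hK, Submodule.mem_iInf] at hwK
  apply PiLp.ext; intro j
  have := hwK j
  rw [LinearMap.mem_ker] at this
  simpa [vpart] using this

lemma orthonormal_horiz (n m : ℕ) :
    Orthonormal ℝ (fun i₁ : Fin n => EuclideanSpace.single (Fin.castAdd m i₁) (1 : ℝ)) :=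
  (EuclideanSpace.orthonormal_single (𝕜 := ℝ) (ι := Fin (n+m))).comp _
    (Fin.castAdd_injective n m)

lemma finrank_L0_direction (n m : ℕ) : Module.finrank ℝ (L0 n m).direction = n := by
  rw [L0_direction]
  rw [finrank_span_eq_card (orthonormal_horiz n m).linearIndependent]
  simp
lemma graphMap_lipschitz {n m : ℕ} {A : EuclideanSpace ℝ (Fin n) → EuclideanSpace ℝ (Fin m)}
    (hA : LipschitzWith 1 A) : LipschitzWith 2 (graphMap n m A) := by
  apply LipschitzWith.of_dist_le_mul
  intro a b
  have h := graph_dist_sq A a b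
  have hA' := hA.dist_le_mul a b
  rw [NNReal.coe_one, one_mul] at hA'
  rw [NNReal.coe_two]
  have h0 : (0:ℝ) ≤ dist a b := dist_nonneg
  have h1 : (0:ℝ) ≤ dist (graphMap n m A a) (graphMap n m A b) := dist_nonneg
  nlinarith [dist_nonneg (x := A a) (y := A b)]

lemma graphMap_measurable {n m : ℕ} {A : EuclideanSpace ℝ (Fin n) → EuclideanSpace ℝ (Fin m)}
    (hA : LipschitzWith 1 A) : Measurable (graphMap n m A) :=
  (graphMap_lipschitz hA).continuous.measurable

lemma phi0_measurable : Measurable phi0 := by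
  unfold phi0
  apply Measurable.ite (measurableSet_le measurable_id measurable_const) measurable_const
  apply Measurable.ite (measurableSet_lt measurable_id measurable_const) _ measurable_const
  fun_prop

lemma cutoff_measurable {d : ℕ} (x : EuclideanSpace ℝ (Fin d)) (r : ℝ) :
    Measurable (cutoff x r) := by
  unfold cutoff
  exact phi0_measurable.comp ((measurable_dist.comp (measurable_id.prodMk measurable_const)).div_const r)
variable {E : Type*} [NormedAddCommGroup E] [InnerProductSpace ℝ E] [FiniteDimensional ℝ E]

/-- Key linear algebra swap lemma. -/
lemma swap_lemma (M N : Submodule ℝ E) (hrk : Module.finrank ℝ M = Module.finrank ℝ N)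
    {v : E} (hv : v ∈ N) (hv1 : ‖v‖ = 1) :
    ∃ w, w ∈ M ∧ ‖w‖ = 1 ∧
      ‖(Submodule.orthogonalProjectionOnto N w : E)‖ ≤ ‖(Submodule.orthogonalProjectionOnto M v : E)‖ := by
  set c : ℝ := ‖(Submodule.orthogonalProjectionOnto M v : E)‖ with hc
  have hc0 : 0 ≤ c := norm_nonneg _
  set T' : M →ₗ[ℝ] N := ((Submodule.orthogonalProjectionOnto N).toLinearMap.comp M.subtype) with hT'
  have hT'app : ∀ b : M, T' b = Submodule.orthogonalProjectionOnto N (b : E) := fun b => rfl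
  by_cases hinj : Function.Injective T'
  · -- injective case
    have hsurj : Function.Surjective T' :=
      (LinearMap.injective_iff_surjective_of_finrank_eq_finrank hrk).mp hinj
    obtain ⟨w₀, hw₀⟩ := hsurj ⟨v, hv⟩
    have hw₀ne : w₀ ≠ 0 := by
      intro h
      rw [h, map_zero] at hw₀
      have : v = 0 := by simpa using congrArg (Subtype.val) hw₀.symm
      rw [this] at hv1; simp at hv1
    have hw₀pos : 0 < ‖(w₀ : E)‖ := by
      simpa [norm_pos_iff] using hw₀ne
    have hpair : ⟪Submodule.orthogonalProjectionOnto M v, w₀⟫ = 1 := by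
      have h1 : ⟪Submodule.orthogonalProjectionOnto M v, w₀⟫ = ⟪v, (w₀ : E)⟫ :=
        Submodule.inner_orthogonalProjectionOnto_eq_of_mem_right (K := M) w₀ v
      have h2 : ⟪(⟨v, hv⟩ : N), Submodule.orthogonalProjectionOnto N (w₀ : E)⟫ = ⟪v, (w₀ : E)⟫ :=
        Submodule.inner_orthogonalProjectionOnto_eq_of_mem_left (K := N) ⟨v, hv⟩ (w₀ : E)
      rw [h1, ← h2, ← hT'app, hw₀]
      have h3 : ⟪(⟨v, hv⟩ : N), (⟨v, hv⟩ : N)⟫ = ⟪v, v⟫ := rfl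
      rw [h3, real_inner_self_eq_norm_sq, hv1]; norm_num
    have hcw : 1 ≤ c * ‖(w₀ : E)‖ := by
      calc (1:ℝ) = ⟪Submodule.orthogonalProjectionOnto M v, w₀⟫ := hpair.symm
      _ ≤ ‖Submodule.orthogonalProjectionOnto M v‖ * ‖w₀‖ := real_inner_le_norm _ _
      _ = c * ‖(w₀ : E)‖ := rfl
    refine ⟨(‖(w₀ : E)‖⁻¹ • (w₀ : E)), M.smul_mem _ w₀.2, ?_, ?_⟩
    · rw [norm_smul, norm_inv, norm_norm, inv_mul_cancel₀ hw₀pos.ne']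
    · have hproj : Submodule.orthogonalProjectionOnto N (‖(w₀ : E)‖⁻¹ • (w₀ : E))
          = ‖(w₀ : E)‖⁻¹ • (⟨v, hv⟩ : N) := by
        rw [_root_.map_smul, ← hT'app, hw₀]
      rw [hproj, Submodule.coe_smul, norm_smul, norm_inv, norm_norm]
      have hnv : ‖((⟨v, hv⟩ : N) : E)‖ = 1 := hv1
      rw [hnv, mul_one]
      nlinarith [inv_mul_cancel₀ hw₀pos.ne', hcw, hw₀pos]
  · -- non-injective case
    rw [← LinearMap.ker_eq_bot] at hinj
    obtain ⟨k, hk_mem, hk_ne⟩ := Submodule.exists_mem_ne_zero_of_ne_bot hinj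
    have hkpos : 0 < ‖(k : E)‖ := by simpa [norm_pos_iff] using hk_ne
    refine ⟨(‖(k : E)‖⁻¹ • (k : E)), M.smul_mem _ k.2, ?_, ?_⟩
    · rw [norm_smul, norm_inv, norm_norm, inv_mul_cancel₀ hkpos.ne']
    · have hproj : Submodule.orthogonalProjectionOnto N (‖(k : E)‖⁻¹ • (k : E)) = 0 := by
        rw [_root_.map_smul, ← hT'app]
        rw [LinearMap.mem_ker] at hk_mem
        rw [hk_mem, smul_zero]
      rw [hproj]
      simpa using hc0
lemma pythag {E : Type*} [NormedAddCommGroup E] [InnerProductSpace ℝ E]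
    (K : Submodule ℝ E) [K.HasOrthogonalProjection] (v : E) :
    ‖v‖ ^ 2 = ‖(Submodule.orthogonalProjectionOnto K v : E)‖ ^ 2 + ‖v - Submodule.orthogonalProjectionOnto K v‖ ^ 2 := by
  have hperp : ⟪((Submodule.orthogonalProjectionOnto K v : K) : E), v - Submodule.orthogonalProjectionOnto K v⟫ = 0 := by
    have hmem := Submodule.sub_starProjection_mem_orthogonal (K := K) v
    exact (Submodule.mem_orthogonal K _).mp hmem _ (Subtype.coe_prop _)
  have hdecomp : ((Submodule.orthogonalProjectionOnto K v : K) : E) + (v - Submodule.orthogonalProjectionOnto K v) = v := by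
    abel
  calc ‖v‖ ^ 2 = ‖((Submodule.orthogonalProjectionOnto K v : K) : E) + (v - Submodule.orthogonalProjectionOnto K v)‖ ^ 2 := by
        rw [hdecomp]
  _ = _ := by rw [norm_add_sq_real, hperp]; ring

lemma norm_vpart_le {n m : ℕ} (z : EuclideanSpace ℝ (Fin (n + m))) : ‖vpart z‖ ≤ ‖z‖ := by
  have h := norm_split z
  nlinarith [norm_nonneg (vpart z), norm_nonneg z, sq_nonneg (‖hpart z‖)]

set_option maxHeartbeats 2000000 in
lemma exists_normal {n m : ℕ} (L : AffineSubspace ℝ (EuclideanSpace ℝ (Fin (n + m))))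
    (hL : IsPlane n L) (hang : planeAngle L (L0 n m) > 1 - 1/10000) :
    ∃ u : EuclideanSpace ℝ (Fin (n + m)), ‖u‖ ≤ 1 ∧ (∀ q ∈ L.direction, ⟪u, q⟫ = 0) ∧
      ‖vpart u‖ + 1/2 ≤ ‖hpart u‖ := by
  classical
  set E := EuclideanSpace ℝ (Fin (n + m))
  set M₀ : Submodule ℝ E := (L0 n m).direction with hM₀
  set S : Set E := (L.direction : Set E) ∩ closedBall 0 1 with hS
  set T₀ : Set E := (M₀ : Set E) ∩ closedBall 0 1 with hT₀
  have hplane : planeAngle L (L0 n m) = hausdorffDist S T₀ := rfl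
  -- step 1 : get a witness w ∈ M₀ with ‖w‖ ≤ 1 and ‖w - Π_L w‖ > 99/100
  have hstep1 : ∃ w, w ∈ M₀ ∧ ‖w‖ ≤ 1 ∧
      99/100 < ‖w - (Submodule.orthogonalProjectionOnto L.direction w : E)‖ := by
    have hfin : hausdorffEDist S T₀ ≠ ⊤ := by
      intro h
      rw [hplane] at hang
      have : hausdorffDist S T₀ = 0 := by
        simp only [hausdorffDist, h, ENNReal.toReal_top]
      rw [this] at hang
      norm_num at hang
    have hlt : ENNReal.ofReal (1 - 1/10000) < hausdorffEDist S T₀ := by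
      rw [ENNReal.ofReal_lt_iff_lt_toReal (by norm_num) hfin]
      rw [hplane] at hang
      exact hang
    rw [hausdorffEDist_def, lt_sup_iff] at hlt
    -- helper for distance extraction
    have hkey : ∀ (v : E) (K : Submodule ℝ E) [K.HasOrthogonalProjection], ‖v‖ ≤ 1 →
        ENNReal.ofReal (1 - 1/10000) < infEDist v ((K : Set E) ∩ closedBall 0 1) →
        1 - 1/10000 < ‖v - (Submodule.orthogonalProjectionOnto K v : E)‖ := by
      intro v K _ hv1 hlt'
      have hmemK : ((Submodule.orthogonalProjectionOnto K v : K) : E) ∈ (K : Set E) ∩ closedBall 0 1 := by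
        constructor
        · exact Subtype.coe_prop _
        · rw [mem_closedBall_zero_iff]
          have hp := pythag K v
          nlinarith [norm_nonneg ((Submodule.orthogonalProjectionOnto K v : K) : E), norm_nonneg v,
            sq_nonneg ‖v - (Submodule.orthogonalProjectionOnto K v : E)‖]
      have hle := infEDist_le_edist_of_mem (x := v) hmemK
      have := lt_of_lt_of_le hlt' hle
      rw [edist_dist] at this
      rw [ENNReal.ofReal_lt_ofReal_iff_of_nonneg (by norm_num)] at this
      rwa [dist_eq_norm] at this
    rcases hlt with h | h
    · -- witness in L.direction : use swap lemma
      simp only [lt_iSup_iff] at h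
      obtain ⟨v, hvS, hv⟩ := h
      have hv1 : ‖v‖ ≤ 1 := mem_closedBall_zero_iff.mp hvS.2
      have hfar : 1 - 1/10000 < ‖v - (Submodule.orthogonalProjectionOnto M₀ v : E)‖ := hkey v M₀ hv1 hv
      have hpv := pythag M₀ v
      set a := ‖(Submodule.orthogonalProjectionOnto M₀ v : E)‖ with ha
      set q := ‖v - (Submodule.orthogonalProjectionOnto M₀ v : E)‖ with hq
      have hvpos : (0:ℝ) < ‖v‖ := by
        nlinarith [norm_nonneg v, hfar, sq_nonneg a]
      set vv := ‖v‖⁻¹ • v with hvv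
      have hvvN : vv ∈ L.direction := Submodule.smul_mem _ _ hvS.1
      have hvv1 : ‖vv‖ = 1 := by
        rw [hvv, norm_smul, norm_inv, norm_norm, inv_mul_cancel₀ hvpos.ne']
      obtain ⟨w, hwM, hw1, hwle⟩ := swap_lemma M₀ L.direction
        (by rw [hM₀, finrank_L0_direction, hL]) hvvN hvv1
      refine ⟨w, hwM, hw1.le, ?_⟩
      have hpw := pythag L.direction w
      have hprojvv : ‖(Submodule.orthogonalProjectionOnto M₀ vv : E)‖ = ‖v‖⁻¹ * a := by
        rw [hvv, _root_.map_smul, Submodule.coe_smul, norm_smul, norm_inv, norm_norm, ha]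
      rw [hprojvv] at hwle
      -- now numeric
      set b := ‖(Submodule.orthogonalProjectionOnto L.direction w : E)‖ with hb
      set s := ‖w - (Submodule.orthogonalProjectionOnto L.direction w : E)‖ with hs'
      by_contra hcon
      push_neg at hcon
      have hqnv : q ≤ ‖v‖ := by nlinarith [norm_nonneg v, sq_nonneg a]
      have hbv : b * ‖v‖ ≤ a := by
        have := mul_le_mul_of_nonneg_right hwle hvpos.le
        rwa [mul_comm (‖v‖⁻¹) a, mul_assoc, inv_mul_cancel₀ hvpos.ne', mul_one] at this
      have hq1 : q > 1 - 1/10000 := hfar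
      have hb0 : 0 ≤ b := norm_nonneg _
      have hs0 : 0 ≤ s := norm_nonneg _
      have ha0 : 0 ≤ a := norm_nonneg _
      have hnv1 : ‖v‖ ≤ 1 := hv1
      -- hpv : ‖v‖^2 = a^2 + q^2 ; hpw : 1 = b^2 + s^2 (after hw1)
      rw [hw1] at hpw
      have hq0 : (0:ℝ) ≤ q := norm_nonneg _
      have hq2 : (9999/10000:ℝ)^2 ≤ q^2 := by nlinarith
      have hb2 : (199/10000:ℝ) ≤ b^2 := by nlinarith
      have hbq : b * q ≤ a := by nlinarith [mul_le_mul_of_nonneg_left hqnv hb0]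
      have hbq2 : (b*q)^2 ≤ a^2 := pow_le_pow_left₀ (mul_nonneg hb0 hq0) hbq 2
      have haq : a^2 ≤ 1 - q^2 := by nlinarith
      have hprod : (199/10000:ℝ) * ((9999/10000:ℝ)^2) ≤ b^2 * q^2 :=
        mul_le_mul hb2 hq2 (by positivity) (sq_nonneg b)
      rw [mul_pow] at hbq2
      linarith
    · -- witness in M₀ directly
      simp only [lt_iSup_iff] at h
      obtain ⟨w, hwT, hw⟩ := h
      have hw1 : ‖w‖ ≤ 1 := mem_closedBall_zero_iff.mp hwT.2
      have hfar := hkey w L.direction hw1 hw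
      exact ⟨w, hwT.1, hw1, by linarith⟩
  obtain ⟨w, hwM, hw1, hwfar⟩ := hstep1
  set u := w - (Submodule.orthogonalProjectionOnto L.direction w : E) with hu
  have hpw := pythag L.direction w
  rw [← hu] at hpw
  have hperp : ∀ q ∈ L.direction, ⟪u, q⟫ = 0 := by
    intro q hqL
    have hmem := Submodule.sub_starProjection_mem_orthogonal (K := L.direction) w
    have := (Submodule.mem_orthogonal L.direction u).mp hmem q hqL
    rw [real_inner_comm]
    exact this
  have hu1 : ‖u‖ ≤ 1 := by
    nlinarith [norm_nonneg u, norm_nonneg (Submodule.orthogonalProjectionOnto L.direction w : E), norm_nonneg w]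
  -- vpart bounds
  have hvpu : vpart u = - vpart ((Submodule.orthogonalProjectionOnto L.direction w : E)) := by
    have hvw : vpart w = 0 := vpart_eq_zero_of_mem hwM
    apply PiLp.ext; intro j
    have : vpart u j = vpart w j - vpart ((Submodule.orthogonalProjectionOnto L.direction w : E)) j := rfl
    rw [this, hvw]
    simp
  have hb_small : ‖(Submodule.orthogonalProjectionOnto L.direction w : E)‖ ≤ 3/20 := by
    have hu2 : (99/100:ℝ)^2 < ‖u‖^2 := by nlinarith [norm_nonneg u]
    have hw2 : ‖w‖^2 ≤ 1 := by nlinarith [norm_nonneg w]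
    nlinarith [norm_nonneg (Submodule.orthogonalProjectionOnto L.direction w : E),
      sq_nonneg (‖(Submodule.orthogonalProjectionOnto L.direction w : E)‖ - 3/20)]
  have hvu : ‖vpart u‖ ≤ 3/20 := by
    rw [hvpu, norm_neg]
    exact le_trans (norm_vpart_le _) hb_small
  have hnu : 99/100 < ‖u‖ := hwfar
  have hns := norm_split u
  refine ⟨u, hu1, hperp, ?_⟩
  nlinarith [norm_nonneg (hpart u), norm_nonneg (vpart u)]
lemma norm_hpart_le {n m : ℕ} (z : EuclideanSpace ℝ (Fin (n + m))) : ‖hpart z‖ ≤ ‖z‖ := by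
  have h := norm_split z
  nlinarith [norm_nonneg (hpart z), norm_nonneg z, sq_nonneg (‖vpart z‖)]

lemma dist_le_graph_dist {n m : ℕ} (A : EuclideanSpace ℝ (Fin n) → EuclideanSpace ℝ (Fin m))
    (a b : EuclideanSpace ℝ (Fin n)) : dist a b ≤ dist (graphMap n m A a) (graphMap n m A b) := by
  nlinarith [graph_dist_sq A a b, dist_nonneg (x := a) (y := b),
    dist_nonneg (x := graphMap n m A a) (y := graphMap n m A b), sq_nonneg (dist (A a) (A b))]

set_option maxHeartbeats 4000000

/-- Let `Γ` be the graph of a `1`-Lipschitz `A : ℝ^n → ℝ^{d-n}` and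
`σ = (Π_Γ)_* H^n|_{L₀}`. There is `ε₀ = ε₀(n) > 0` so that for any ball `B` centered on `Γ` and
any `n`-plane `L` with `∠(L, L₀) > 1 - ε₀`, one has `α_{σ,2,L}(B) ≳ 1`, with an implicit
constant depending only on `n` and `d`. -/
theorem alpha_large_of_steep_plane (n m : ℕ) :
    ∃ ε₀ : ℝ, 0 < ε₀ ∧ ∃ c : ℝ≥0∞, 0 < c ∧
      ∀ A : EuclideanSpace ℝ (Fin n) → EuclideanSpace ℝ (Fin m), LipschitzWith 1 A →
        ∀ x ∈ range (graphMap n m A), ∀ r : ℝ, 0 < r →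
          ∀ L : AffineSubspace ℝ (EuclideanSpace ℝ (Fin (n + m))), IsPlane n L →
            planeAngle L (L0 n m) > 1 - ε₀ →
            c ≤ alphaL n 2 (graphMeasure n m A) x r L := by
  classical
  refine ⟨1/10000, by norm_num,
    ENNReal.ofReal (1/16) * ENNReal.ofReal ((1/64 : ℝ)^n), ?_, ?_⟩
  · apply ENNReal.mul_pos
    · simp only [ne_eq, ENNReal.ofReal_eq_zero, not_le]; norm_num
    · simp only [ne_eq, ENNReal.ofReal_eq_zero, not_le]; positivity
  intro A hA x hx r hr L hL hang
  -- dispose of the degenerate case n = 0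
  rcases Nat.eq_zero_or_pos n with hn0 | hn
  · exfalso
    subst hn0
    have hLbot : L.direction = ⊥ := Submodule.finrank_eq_zero.mp hL
    have hL0bot : (L0 0 m).direction = ⊥ := Submodule.finrank_eq_zero.mp (finrank_L0_direction 0 m)
    have : planeAngle L (L0 0 m) = 0 := by
      unfold planeAngle
      rw [hLbot, hL0bot]
      exact hausdorffDist_self_zero
    rw [this] at hang
    norm_num at hang
  obtain ⟨y₀, hy₀⟩ := hx
  -- abbreviations
  set c : ℝ≥0∞ := ENNReal.ofReal (1/16) * ENNReal.ofReal ((1/64 : ℝ)^n) with hc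
  set G := graphMap n m A with hG
  set μ := graphMeasure n m A with hμ
  set σL : Measure (EuclideanSpace ℝ (Fin (n + m))) :=
    (μH[(n : ℝ)]).restrict (L : Set (EuclideanSpace ℝ (Fin (n + m)))) with hσL
  set aBL : ℝ≥0∞ := cutoffMeas μ x r univ / cutoffMeas σL x r univ with haBL
  set D : ℝ≥0∞ := ENNReal.ofReal r * μ (ball x r) ^ (1/(2:ℝ)) with hD
  have halpha : alphaL n 2 μ x r L
      = Wp 2 (cutoffMeas μ x r) (aBL • cutoffMeas σL x r) / D := rfl
  rw [halpha]
  -- Haar measure facts on ℝ^n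
  haveI hnt : Nontrivial (EuclideanSpace ℝ (Fin n)) := by
    refine nontrivial_of_ne (EuclideanSpace.single (⟨0, hn⟩ : Fin n) (1:ℝ)) 0 ?_
    intro h
    have := congrFun (congrArg (WithLp.equiv 2 _) h) ⟨0, hn⟩
    simp [EuclideanSpace.single_apply] at this
  haveI hhaar : (μH[(n : ℝ)] : Measure (EuclideanSpace ℝ (Fin n))).IsAddHaarMeasure := by
    have h := isAddHaarMeasure_hausdorffMeasure (E := EuclideanSpace ℝ (Fin n))
    rwa [finrank_euclideanSpace_fin] at h
  set β : ℝ≥0∞ := (μH[(n : ℝ)] : Measure (EuclideanSpace ℝ (Fin n))) (ball 0 1) with hβ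
  have hβ0 : 0 < β := measure_ball_pos _ _ one_pos
  have hβtop : β < ⊤ := measure_ball_lt_top
  have hball_n : ∀ (z : EuclideanSpace ℝ (Fin n)) (ρ : ℝ), 0 ≤ ρ →
      (μH[(n : ℝ)] : Measure (EuclideanSpace ℝ (Fin n))) (ball z ρ)
        = ENNReal.ofReal (ρ^n) * β := by
    intro z ρ hρ
    have h := Measure.addHaar_ball (μH[(n : ℝ)] : Measure (EuclideanSpace ℝ (Fin n))) z hρ
    rwa [finrank_euclideanSpace_fin] at h
  -- measurability
  have hmeasG : Measurable G := graphMap_measurable hA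
  have hmap_ball : μ (ball x r) = (μH[(n : ℝ)]) (G ⁻¹' ball x r) := by
    rw [hμ, graphMeasure, Measure.map_apply hmeasG measurableSet_ball]
  -- ball comparison
  have hpre_sub : G ⁻¹' ball x r ⊆ ball y₀ r := by
    intro y hy
    simp only [mem_preimage, mem_ball] at hy ⊢
    calc dist y y₀ ≤ dist (G y) (G y₀) := dist_le_graph_dist A y y₀
    _ = dist (G y) x := by rw [hy₀]
    _ < r := hy
  have hμball_le : μ (ball x r) ≤ ENNReal.ofReal (r^n) * β := by
    rw [hmap_ball, ← hball_n y₀ r hr.le]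
    exact measure_mono hpre_sub
  have hpre_sup : ball y₀ (r/2) ⊆ G ⁻¹' ball x r := by
    intro y hy
    simp only [mem_preimage, mem_ball] at hy ⊢
    have h1 : dist (G y) (G y₀) ≤ 2 * dist y y₀ := by
      have := (graphMap_lipschitz hA).dist_le_mul y y₀
      rwa [NNReal.coe_two] at this
    rw [← hy₀]
    calc dist (G y) (G y₀) ≤ 2 * dist y y₀ := h1
    _ < 2 * (r/2) := by have := dist_nonneg (x := y) (y := y₀); linarith
    _ = r := by ring
  have hμball_pos : 0 < μ (ball x r) := by
    rw [hmap_ball]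
    exact lt_of_lt_of_le (measure_ball_pos _ y₀ (by linarith)) (measure_mono hpre_sup)
  have hμball_top : μ (ball x r) < ⊤ :=
    lt_of_le_of_lt hμball_le (ENNReal.mul_lt_top ENNReal.ofReal_lt_top hβtop)
  -- D is finite and positive
  have hD0 : D ≠ 0 := by
    rw [hD]
    apply mul_ne_zero
    · simp [ENNReal.ofReal_eq_zero, not_le, hr]
    · exact (ENNReal.rpow_pos hμball_pos hμball_top.ne).ne'
  have hDtop : D ≠ ⊤ := by
    rw [hD]
    exact ENNReal.mul_ne_top ENNReal.ofReal_ne_top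
      (ENNReal.rpow_ne_top_of_nonneg (by norm_num) hμball_top.ne)
  rw [ENNReal.le_div_iff_mul_le (Or.inl hD0) (Or.inl hDtop)]
  -- get the good normal vector and base point
  obtain ⟨u, hu1, huperp, humargin⟩ := exists_normal L hL hang
  have hLne : ((L : Set (EuclideanSpace ℝ (Fin (n + m))))).Nonempty := by
    rcases (L : Set (EuclideanSpace ℝ (Fin (n+m)))).eq_empty_or_nonempty with h | h
    · exfalso
      have hbot : L = ⊥ := by
        rwa [AffineSubspace.coe_eq_bot_iff] at h
      rw [IsPlane, hbot, AffineSubspace.direction_bot] at hL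
      rw [finrank_bot] at hL
      omega
    · exact h
  obtain ⟨q₀, hq₀⟩ := hLne
  -- the linear functional f
  set uh := hpart u with huh
  set uv := vpart u with huv
  set f : EuclideanSpace ℝ (Fin n) → ℝ := fun y => ⟪y, uh⟫ + ⟪A y, uv⟫ with hf
  set c₀ : ℝ := ⟪q₀, u⟫ with hc₀
  have hfu : ∀ y, ⟪G y, u⟫ = f y := by
    intro y
    rw [hG, inner_split (graphMap n m A y) u, hpart_graphMap, vpart_graphMap]
  have huh_pos : (0:ℝ) < ‖uh‖ := by
    have := norm_nonneg uv
    linarith [humargin]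
  have huh1 : ‖uh‖ ≤ 1 := le_trans (norm_hpart_le u) hu1
  have huv1 : ‖uv‖ ≤ 1 := le_trans (norm_vpart_le u) hu1
  have hlipf : ∀ y z : EuclideanSpace ℝ (Fin n), |f y - f z| ≤ 2 * ‖y - z‖ := by
    intro y z
    have h1 : f y - f z = ⟪y - z, uh⟫ + ⟪A y - A z, uv⟫ := by
      rw [hf]; simp only [inner_sub_left]; ring
    rw [h1]
    have h2 : |⟪y - z, uh⟫| ≤ ‖y - z‖ * ‖uh‖ := abs_real_inner_le_norm _ _
    have h3 : |⟪A y - A z, uv⟫| ≤ ‖A y - A z‖ * ‖uv‖ := abs_real_inner_le_norm _ _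
    have h4 : ‖A y - A z‖ ≤ ‖y - z‖ := by
      rw [← dist_eq_norm, ← dist_eq_norm]
      have := hA.dist_le_mul y z
      rwa [NNReal.coe_one, one_mul] at this
    have h6 : (0:ℝ) ≤ ‖y - z‖ := norm_nonneg _
    calc |⟪y - z, uh⟫ + ⟪A y - A z, uv⟫| ≤ |⟪y - z, uh⟫| + |⟪A y - A z, uv⟫| := abs_add_le _ _
    _ ≤ 2 * ‖y - z‖ := by nlinarith [norm_nonneg (A y - A z), norm_nonneg uh, norm_nonneg uv]
  -- the two test points
  set e : EuclideanSpace ℝ (Fin n) := ‖uh‖⁻¹ • uh with he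
  have he1 : ‖e‖ = 1 := by
    rw [he, norm_smul, norm_inv, norm_norm, inv_mul_cancel₀ huh_pos.ne']
  set zp : EuclideanSpace ℝ (Fin n) := y₀ + (r/4) • e with hzp
  set zm : EuclideanSpace ℝ (Fin n) := y₀ - (r/4) • e with hzm
  have hzpzm : zp - zm = (r/2) • e := by
    rw [hzp, hzm]
    have : y₀ + (r/4) • e - (y₀ - (r/4) • e) = (r/4) • e + (r/4) • e := by abel
    rw [this, ← add_smul]
    congr 1
    ring
  have hzpzm_norm : ‖zp - zm‖ = r/2 := by
    rw [hzpzm, norm_smul, he1, mul_one, Real.norm_eq_abs, abs_of_pos (by linarith)]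
  have hgap : r/4 ≤ f zp - f zm := by
    have h1 : f zp - f zm = ⟪zp - zm, uh⟫ + ⟪A zp - A zm, uv⟫ := by
      rw [hf]; simp only [inner_sub_left]; ring
    have h2 : ⟪zp - zm, uh⟫ = (r/2) * ‖uh‖ := by
      rw [hzpzm, he, smul_smul, real_inner_smul_left, real_inner_self_eq_norm_mul_norm]
      field_simp
    have h3 : |⟪A zp - A zm, uv⟫| ≤ (r/2) * ‖uv‖ := by
      have h4 : ‖A zp - A zm‖ ≤ r/2 := by
        have h5 := hA.dist_le_mul zp zm
        rw [NNReal.coe_one, one_mul] at h5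
        calc ‖A zp - A zm‖ = dist (A zp) (A zm) := (dist_eq_norm _ _).symm
        _ ≤ dist zp zm := h5
        _ = r/2 := by rw [dist_eq_norm, hzpzm_norm]
      calc |⟪A zp - A zm, uv⟫| ≤ ‖A zp - A zm‖ * ‖uv‖ := abs_real_inner_le_norm _ _
      _ ≤ (r/2) * ‖uv‖ := by
        apply mul_le_mul_of_nonneg_right h4 (norm_nonneg _)
    rw [h1, h2]
    have h6 := abs_le.mp h3
    nlinarith [humargin, norm_nonneg uv]
  -- choose the good point z'
  have hchoice : ∃ z' : EuclideanSpace ℝ (Fin n), dist z' y₀ = r/4 ∧ r/8 ≤ |f z' - c₀| := by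
    by_cases hcase : r/8 ≤ |f zp - c₀|
    · refine ⟨zp, ?_, hcase⟩
      rw [hzp, dist_eq_norm]
      have : y₀ + (r/4) • e - y₀ = (r/4) • e := by abel
      rw [this, norm_smul, he1, mul_one, Real.norm_eq_abs, abs_of_pos (by linarith)]
    · refine ⟨zm, ?_, ?_⟩
      · rw [hzm, dist_eq_norm]
        have : y₀ - (r/4) • e - y₀ = -((r/4) • e) := by abel
        rw [this, norm_neg, norm_smul, he1, mul_one, Real.norm_eq_abs, abs_of_pos (by linarith)]
      · push_neg at hcase
        obtain ⟨h7a, h7b⟩ := abs_lt.mp hcase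
        exact le_abs.mpr (Or.inr (by linarith))
  obtain ⟨z', hz'dist, hz'far⟩ := hchoice
  -- pointwise estimates on the small ball
  have hpoint : ∀ y ∈ ball z' (r/64),
      ENNReal.ofReal (cutoff x r (G y)) = 1 ∧
      ENNReal.ofReal (r/16) ≤ infEDist (G y) (L : Set (EuclideanSpace ℝ (Fin (n+m)))) := by
    intro y hy
    rw [mem_ball] at hy
    have hyy₀ : dist y y₀ < r/2 := by
      calc dist y y₀ ≤ dist y z' + dist z' y₀ := dist_triangle _ _ _
      _ < r/64 + r/4 := by rw [hz'dist]; linarith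
      _ < r/2 := by linarith
    constructor
    · -- cutoff is 1
      have hdist : dist (G y) x < r := by
        rw [← hy₀]
        have h1 : dist (G y) (G y₀) ≤ 2 * dist y y₀ := by
          have := (graphMap_lipschitz hA).dist_le_mul y y₀
          rwa [NNReal.coe_two] at this
        linarith
      have hcut : cutoff x r (G y) = 1 := by
        unfold cutoff phi0
        rw [if_pos]
        have := dist_nonneg (x := G y) (y := x)
        rw [div_le_iff₀ hr]
        linarith
      rw [hcut]; simp
    · -- far from L
      rw [le_infEDist]
      intro q hq
      rw [edist_dist]
      apply ENNReal.ofReal_le_ofReal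
      have hfyfar : r/16 ≤ |f y - c₀| := by
        have h8 : |f y - f z'| ≤ 2 * ‖y - z'‖ := hlipf y z'
        rw [← dist_eq_norm] at h8
        have h9 : |f y - c₀| ≥ |f z' - c₀| - |f z' - f y| := by
          have := abs_sub_abs_le_abs_sub (f z' - c₀) (f z' - f y)
          have heq : f z' - c₀ - (f z' - f y) = f y - c₀ := by ring
          rw [heq] at this
          linarith
      /- |f z' - f y| = |f y - f z'| -/
        rw [abs_sub_comm (f z') (f y)] at h9
        linarith
      have hinner : |⟪G y - q, u⟫| = |f y - c₀| := by
        rw [inner_sub_left, hfu]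
        have hqu : ⟪q, u⟫ = c₀ := by
          have hqd : q - q₀ ∈ L.direction := by
            have := AffineSubspace.vsub_mem_direction hq hq₀
            simpa [vsub_eq_sub] using this
          have := huperp _ hqd
          rw [real_inner_comm] at this
          rw [inner_sub_left] at this
          rw [hc₀]
          linarith [this]
        rw [hqu]
      have hcs : |⟪G y - q, u⟫| ≤ ‖G y - q‖ := by
        calc |⟪G y - q, u⟫| ≤ ‖G y - q‖ * ‖u‖ := abs_real_inner_le_norm _ _
        _ ≤ ‖G y - q‖ * 1 := by
          apply mul_le_mul_of_nonneg_left hu1 (norm_nonneg _)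
        _ = ‖G y - q‖ := mul_one _
      rw [dist_eq_norm]
      rw [hinner] at hcs
      linarith
  -- measure-theoretic chain
  set F : EuclideanSpace ℝ (Fin (n + m)) → ℝ≥0∞ :=
    fun w => infEDist w (L : Set (EuclideanSpace ℝ (Fin (n + m)))) ^ (2:ℝ) with hF
  have hFmeas : Measurable F :=
    (ENNReal.continuous_rpow_const.comp continuous_infEDist).measurable
  have hdensmeas : Measurable (fun z : EuclideanSpace ℝ (Fin (n + m)) =>
      ENNReal.ofReal (cutoff x r z)) := ENNReal.measurable_ofReal.comp (cutoff_measurable x r)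
  have hLmeas : MeasurableSet (L : Set (EuclideanSpace ℝ (Fin (n + m)))) :=
    (AffineSubspace.closed_of_finiteDimensional L).measurableSet
  have hν0 : (aBL • cutoffMeas σL x r) ((L : Set (EuclideanSpace ℝ (Fin (n + m))))ᶜ) = 0 := by
    rw [Measure.smul_apply, smul_eq_mul]
    have h1 : cutoffMeas σL x r ((L : Set (EuclideanSpace ℝ (Fin (n + m))))ᶜ) = 0 := by
      rw [cutoffMeas, withDensity_apply _ hLmeas.compl]
      apply setLIntegral_measure_zero
      rw [hσL, Measure.restrict_apply hLmeas.compl]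
      simp
    rw [h1, mul_zero]
  refine le_iInf fun π => le_iInf fun hπ => ?_
  have hsnd : ∀ᵐ z ∂π, z.2 ∈ (L : Set (EuclideanSpace ℝ (Fin (n + m)))) := by
    rw [ae_iff]
    have hident : {z : EuclideanSpace ℝ (Fin (n + m)) × EuclideanSpace ℝ (Fin (n + m)) |
        ¬ z.2 ∈ (L : Set (EuclideanSpace ℝ (Fin (n + m))))}
        = Prod.snd ⁻¹' ((L : Set (EuclideanSpace ℝ (Fin (n + m))))ᶜ) := rfl
    rw [hident, ← Measure.map_apply measurable_snd hLmeas.compl, hπ.2]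
    exact hν0
  have key1 : ∫⁻ z, F z.1 ∂π ≤ ∫⁻ z, edist z.1 z.2 ^ (2:ℝ) ∂π := by
    apply lintegral_mono_ae
    filter_upwards [hsnd] with z hz
    exact ENNReal.rpow_le_rpow (infEDist_le_edist_of_mem hz) (by norm_num)
  have key2 : ∫⁻ z, F z.1 ∂π = ∫⁻ w, F w ∂(cutoffMeas μ x r) := by
    rw [← hπ.1, lintegral_map hFmeas measurable_fst]
  have key3 : ∫⁻ w, F w ∂(cutoffMeas μ x r)
      = ∫⁻ w, ((fun z => ENNReal.ofReal (cutoff x r z)) * F) w ∂μ := by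
    rw [cutoffMeas, lintegral_withDensity_eq_lintegral_mul μ hdensmeas hFmeas]
  have key4 : ∫⁻ w, ((fun z => ENNReal.ofReal (cutoff x r z)) * F) w ∂μ
      = ∫⁻ y, ENNReal.ofReal (cutoff x r (G y)) * F (G y) ∂(μH[(n : ℝ)]) := by
    simp only [Pi.mul_apply]
    rw [hμ, graphMeasure]; exact lintegral_map (hdensmeas.mul hFmeas) hmeasG
  have key5 : ENNReal.ofReal (r/16) ^ (2:ℝ) * (μH[(n : ℝ)] :
        Measure (EuclideanSpace ℝ (Fin n))) (ball z' (r/64))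
      ≤ ∫⁻ y, ENNReal.ofReal (cutoff x r (G y)) * F (G y) ∂(μH[(n : ℝ)]) := by
    rw [← lintegral_indicator_const measurableSet_ball]
    apply lintegral_mono
    intro y
    by_cases hy : y ∈ ball z' (r/64)
    · rw [indicator_of_mem hy]
      obtain ⟨hcut1, hfar⟩ := hpoint y hy
      beta_reduce
      rw [hcut1, one_mul]
      exact ENNReal.rpow_le_rpow hfar (by norm_num)
    · rw [indicator_of_notMem hy]
      exact zero_le
  have hcost : ENNReal.ofReal (r/16) ^ (2:ℝ) * (ENNReal.ofReal ((r/64)^n) * β)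
      ≤ ∫⁻ z, edist z.1 z.2 ^ (2:ℝ) ∂π := by
    rw [← hball_n z' (r/64) (by linarith)]
    calc ENNReal.ofReal (r/16) ^ (2:ℝ) * (μH[(n : ℝ)] :
        Measure (EuclideanSpace ℝ (Fin n))) (ball z' (r/64))
        ≤ ∫⁻ y, ENNReal.ofReal (cutoff x r (G y)) * F (G y) ∂(μH[(n : ℝ)]) := key5
    _ = ∫⁻ w, ((fun z => ENNReal.ofReal (cutoff x r z)) * F) w ∂μ := key4.symm
    _ = ∫⁻ w, F w ∂(cutoffMeas μ x r) := key3.symm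
    _ = ∫⁻ z, F z.1 ∂π := key2.symm
    _ ≤ ∫⁻ z, edist z.1 z.2 ^ (2:ℝ) ∂π := key1
  have hWp : (ENNReal.ofReal (r/16) ^ (2:ℝ) * (ENNReal.ofReal ((r/64)^n) * β)) ^ (1/2:ℝ)
      ≤ (∫⁻ z, edist z.1 z.2 ^ (2:ℝ) ∂π) ^ (1/(2:ℝ)) :=
    ENNReal.rpow_le_rpow hcost (by norm_num)
  refine le_trans ?_ hWp
  have hsplit : (ENNReal.ofReal (r/16) ^ (2:ℝ) * (ENNReal.ofReal ((r/64)^n) * β)) ^ (1/2:ℝ)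
      = ENNReal.ofReal (r/16) * (ENNReal.ofReal ((r/64)^n)) ^ (1/2:ℝ) * β ^ (1/2:ℝ) := by
    rw [ENNReal.mul_rpow_of_nonneg _ _ (by norm_num : (0:ℝ) ≤ 1/2),
      ENNReal.mul_rpow_of_nonneg _ _ (by norm_num : (0:ℝ) ≤ 1/2)]
    have h2 : (ENNReal.ofReal (r/16) ^ (2:ℝ)) ^ (1/2:ℝ) = ENNReal.ofReal (r/16) := by
      rw [← ENNReal.rpow_mul]
      norm_num
    rw [h2, mul_assoc]
  rw [hsplit]
  have hDle : D ≤ ENNReal.ofReal r * (ENNReal.ofReal (r^n) * β) ^ (1/2:ℝ) := by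
    rw [hD]
    exact mul_le_mul_right (ENNReal.rpow_le_rpow hμball_le (by norm_num)) _
  have e1 : ENNReal.ofReal ((r/64)^n) = ENNReal.ofReal ((1/64:ℝ)^n) * ENNReal.ofReal (r^n) := by
    rw [← ENNReal.ofReal_mul (by positivity)]
    congr 1
    rw [show (r/64 : ℝ) = (1/64)*r by ring, mul_pow]
  have e2 : ENNReal.ofReal ((1/64:ℝ)^n) ≤ (ENNReal.ofReal ((1/64:ℝ)^n)) ^ (1/2:ℝ) := by
    conv_lhs => rw [← ENNReal.rpow_one (ENNReal.ofReal ((1/64:ℝ)^n))]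
    apply ENNReal.rpow_le_rpow_of_exponent_ge _ (by norm_num)
    exact ENNReal.ofReal_le_one.mpr (pow_le_one₀ (by norm_num) (by norm_num))
  have e3 : ENNReal.ofReal (r/16) = ENNReal.ofReal (1/16) * ENNReal.ofReal r := by
    rw [← ENNReal.ofReal_mul (by norm_num)]
    congr 1
    ring
  calc c * D ≤ c * (ENNReal.ofReal r * (ENNReal.ofReal (r^n) * β) ^ (1/2:ℝ)) :=
        mul_le_mul_right hDle c
  _ = c * ENNReal.ofReal r * (ENNReal.ofReal (r^n)) ^ (1/2:ℝ) * β ^ (1/2:ℝ) := by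
      rw [ENNReal.mul_rpow_of_nonneg _ _ (by norm_num : (0:ℝ) ≤ 1/2)]
      ring
  _ ≤ ENNReal.ofReal (r/16) * (ENNReal.ofReal ((r/64)^n)) ^ (1/2:ℝ) * β ^ (1/2:ℝ) := by
      apply mul_le_mul_left
      rw [e1, ENNReal.mul_rpow_of_nonneg _ _ (by norm_num : (0:ℝ) ≤ 1/2), e3, hc]
      calc ENNReal.ofReal (1/16) * ENNReal.ofReal ((1/64:ℝ)^n) * ENNReal.ofReal r
            * (ENNReal.ofReal (r^n)) ^ (1/2:ℝ)
          ≤ ENNReal.ofReal (1/16) * (ENNReal.ofReal ((1/64:ℝ)^n)) ^ (1/2:ℝ) * ENNReal.ofReal r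
            * (ENNReal.ofReal (r^n)) ^ (1/2:ℝ) := by gcongr
      _ = ENNReal.ofReal (1/16) * ENNReal.ofReal r *
            ((ENNReal.ofReal ((1/64:ℝ)^n)) ^ (1/2:ℝ) * (ENNReal.ofReal (r^n)) ^ (1/2:ℝ)) := by
          ring
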